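/- arXiv:1810.12659 — 5 statements merged into one kernel-verified Lean document; each statement's English description precedes it below -/
import Mathlib

section
/- Every 7×7 real matrix α in the infinitesimal stabilizer of Φ₀, i.e. satisfying Φ₀(αu, v, w) + Φ₀(u, αv, w) + Φ₀(u, v, αw) = 0 for all u, v, w ∈ ℝ⁷, is skew-symmetric: αᵀ = −α. -/
/-!
Contract the derivation identity at `(x, e_b, e_c)` with `Φ₀(x, e_b, e_c)` and sum over `b, c`.
Writing `⟨u × v, w⟩ = Φ₀(u, v, w)`, each of the three resulting terms is evaluated by the
seven-dimensional Lagrange identity `⟨x × y, x × w⟩ = |x|² ⟨y, w⟩ - ⟨x, y⟩ ⟨x, w⟩`, giving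
`2 ⟨x, α x⟩ + |x|² tr α = 0` for all `x`. Taking `x = e_b` and summing gives `tr α = 0`, so the
quadratic form of `α` vanishes and `α` is skew by polarization.
-/

noncomputable section

/-- `tri i j k` is the 3-form `dxᵢ ∧ dxⱼ ∧ dxₖ` on `ℝ⁷` (0-based indices). -/
def tri (i j k : Fin 7) (u v w : Fin 7 → ℝ) : ℝ :=
  u i * (v j * w k - v k * w j) - u j * (v i * w k - v k * w i)
    + u k * (v i * w j - v j * w i)

/-- The standard `G₂` three-form
`Φ₀ = dx₁₂₃ + dx₁₄₅ + dx₁₆₇ + dx₂₄₆ − dx₂₅₇ − dx₃₄₇ − dx₃₅₆` (written here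
with 0-based indices). -/
def phi0 (u v w : Fin 7 → ℝ) : ℝ :=
  tri 0 1 2 u v w + tri 0 3 4 u v w + tri 0 5 6 u v w + tri 1 3 5 u v w
    - tri 1 4 6 u v w - tri 2 3 6 u v w - tri 2 4 5 u v w

/-- The standard Euclidean inner product on `ℝ⁷`. -/
def ip (u v : Fin 7 → ℝ) : ℝ := ∑ i, u i * v i

/-- Components `(Φ₀)_{abc} = Φ₀(e_a, e_b, e_c)` of the three-form `Φ₀`. -/
def phi0c (a b c : Fin 7) : ℝ :=
  phi0 (Pi.single a 1) (Pi.single b 1) (Pi.single c 1)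

/-- The contraction map `f_{Φ₀} : v ↦ v ⌟ Φ₀`, `(f_{Φ₀}(v))_{ab} = Φ₀(v, e_a, e_b)`. -/
def fmat (v : Fin 7 → ℝ) : Matrix (Fin 7) (Fin 7) ℝ :=
  Matrix.of fun a b => phi0 v (Pi.single a 1) (Pi.single b 1)

/-- The cross product on `ℝ⁷` determined by `⟨u × v, w⟩ = Φ₀(u, v, w)`. -/
def cross7 (u v : Fin 7 → ℝ) : Fin 7 → ℝ := fun a => phi0 u v (Pi.single a 1)

open Matrix

lemma phi0_swap_left (u v w : Fin 7 → ℝ) : phi0 v u w = -phi0 u v w := by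
  simp only [phi0, tri]; ring

lemma phi0_swap_right (u v w : Fin 7 → ℝ) : phi0 u w v = -phi0 u v w := by
  simp only [phi0, tri]; ring

lemma cross7_swap (u v : Fin 7 → ℝ) : cross7 v u = -cross7 u v := by
  ext a; exact phi0_swap_left u v _

lemma cross7_dotProduct_cross7 (u v u' v' : Fin 7 → ℝ) :
    cross7 u v ⬝ᵥ cross7 u' v' = ∑ c, phi0 u v (Pi.single c 1) * phi0 u' v' (Pi.single c 1) :=
  rfl

lemma cross7_dotProduct_cross7_left (x y w : Fin 7 → ℝ) :
    cross7 x y ⬝ᵥ cross7 x w = (x ⬝ᵥ x) * (y ⬝ᵥ w) - (x ⬝ᵥ y) * (x ⬝ᵥ w) := by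
  simp only [dotProduct, cross7, phi0, tri, Fin.sum_univ_seven, Pi.single_apply, Fin.reduceEq,
    ↓reduceIte]
  ring

theorem Matrix.transpose_eq_neg_of_dotProduct_mulVec_self_eq_zero {n R : Type*} [Fintype n]
    [DecidableEq n] [CommRing R] (A : Matrix n n R) (hA : ∀ x, x ⬝ᵥ A *ᵥ x = 0) : Aᵀ = -A := by
  have hdiag (k : n) : A k k = 0 := by
    simpa [mulVec_single_one] using hA (Pi.single k 1)
  ext i j
  have hij := hA (Pi.single i 1 + Pi.single j 1)
  simp only [mulVec_add, dotProduct_add, add_dotProduct, mulVec_single_one,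
    single_one_dotProduct, col_apply, hdiag] at hij
  simp only [transpose_apply, neg_apply]
  linear_combination hij

def IsPhi0Derivation (α : Matrix (Fin 7) (Fin 7) ℝ) : Prop :=
  ∀ u v w, phi0 (α *ᵥ u) v w + phi0 u (α *ᵥ v) w + phi0 u v (α *ᵥ w) = 0

section Contraction

variable (α : Matrix (Fin 7) (Fin 7) ℝ) (x : Fin 7 → ℝ)

lemma sum_phi0_mul_phi0_mulVec_left :
    ∑ b, ∑ c, phi0 x (Pi.single b 1) (Pi.single c 1) * phi0 (α *ᵥ x) (Pi.single b 1) (Pi.single c 1)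
      = 6 * (x ⬝ᵥ α *ᵥ x) := by
  simp only [← cross7_dotProduct_cross7, cross7_swap (Pi.single _ 1), neg_dotProduct,
    dotProduct_neg, neg_neg, cross7_dotProduct_cross7_left, single_one_dotProduct,
    Finset.sum_sub_distrib]
  simp only [Pi.single_eq_same, dotProduct, one_mul, Finset.sum_const, Finset.card_univ,
    Fintype.card_fin, nsmul_eq_mul, Nat.cast_ofNat]
  ring

lemma sum_phi0_mul_phi0_mulVec_middle :
    ∑ b, ∑ c, phi0 x (Pi.single b 1) (Pi.single c 1) * phi0 x (α *ᵥ Pi.single b 1) (Pi.single c 1)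
      = (x ⬝ᵥ x) * trace α - x ⬝ᵥ α *ᵥ x := by
  simp only [← cross7_dotProduct_cross7, cross7_dotProduct_cross7_left, single_one_dotProduct,
    dotProduct_single_one, mulVec_single_one, Finset.sum_sub_distrib, ← Finset.mul_sum]
  have hquad : ∑ b, x b * (x ⬝ᵥ α.col b) = x ⬝ᵥ α *ᵥ x := by
    rw [dotProduct_mulVec, dotProduct_comm]; rfl
  rw [hquad]
  rfl

lemma sum_phi0_mul_phi0_mulVec_right :
    ∑ b, ∑ c, phi0 x (Pi.single b 1) (Pi.single c 1) * phi0 x (Pi.single b 1) (α *ᵥ Pi.single c 1)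
      = (x ⬝ᵥ x) * trace α - x ⬝ᵥ α *ᵥ x := by
  rw [Finset.sum_comm, ← sum_phi0_mul_phi0_mulVec_middle]
  refine Finset.sum_congr rfl fun c _ => Finset.sum_congr rfl fun b _ => ?_
  rw [phi0_swap_right x (Pi.single c 1), phi0_swap_right x (α *ᵥ Pi.single c 1), neg_mul_neg]

end Contraction

namespace IsPhi0Derivation

variable {α : Matrix (Fin 7) (Fin 7) ℝ}

theorem two_mul_dotProduct_mulVec_self_add (hα : IsPhi0Derivation α) (x : Fin 7 → ℝ) :
    2 * (x ⬝ᵥ α *ᵥ x) + (x ⬝ᵥ x) * trace α = 0 := by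
  have hcontract : ∑ b, ∑ c, phi0 x (Pi.single b 1) (Pi.single c 1) *
      (phi0 (α *ᵥ x) (Pi.single b 1) (Pi.single c 1) + phi0 x (α *ᵥ Pi.single b 1) (Pi.single c 1)
        + phi0 x (Pi.single b 1) (α *ᵥ Pi.single c 1)) = 0 :=
    Finset.sum_eq_zero fun b _ => Finset.sum_eq_zero fun c _ => by rw [hα, mul_zero]
  simp only [mul_add, Finset.sum_add_distrib, sum_phi0_mul_phi0_mulVec_left,
    sum_phi0_mul_phi0_mulVec_middle, sum_phi0_mul_phi0_mulVec_right] at hcontract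
  linarith

theorem trace_eq_zero (hα : IsPhi0Derivation α) : trace α = 0 := by
  have hdiag (b : Fin 7) : 2 * α b b + trace α = 0 := by
    simpa [mulVec_single_one] using hα.two_mul_dotProduct_mulVec_self_add (Pi.single b 1)
  have hsum := Finset.sum_eq_zero (s := Finset.univ) fun b _ => hdiag b
  rw [Finset.sum_add_distrib, ← Finset.mul_sum] at hsum
  simp only [trace, diag_apply, Finset.sum_const, Finset.card_univ, Fintype.card_fin,
    nsmul_eq_mul, Nat.cast_ofNat] at hsum ⊢
  linarith

theorem dotProduct_mulVec_self_eq_zero (hα : IsPhi0Derivation α) (x : Fin 7 → ℝ) :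
    x ⬝ᵥ α *ᵥ x = 0 := by
  have hx := hα.two_mul_dotProduct_mulVec_self_add x
  rw [hα.trace_eq_zero, mul_zero, add_zero] at hx
  linarith

theorem transpose_eq_neg (hα : IsPhi0Derivation α) : αᵀ = -α :=
  transpose_eq_neg_of_dotProduct_mulVec_self_eq_zero α hα.dotProduct_mulVec_self_eq_zero

end IsPhi0Derivation

/-- every matrix in the infinitesimal stabilizer of `Φ₀` is
skew-symmetric. -/
theorem stmt4 (α : Matrix (Fin 7) (Fin 7) ℝ)
    (h : ∀ u v w, phi0 (α.mulVec u) v w + phi0 u (α.mulVec v) w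
      + phi0 u v (α.mulVec w) = 0) :
    α.transpose = -α :=
  IsPhi0Derivation.transpose_eq_neg h
end
end

section
/- The space 𝔰𝔬(7) of skew-symmetric 7×7 real matrices decomposes as the internal direct sum 𝔰𝔬(7) = 𝔤₂ ⊕ f_{Φ₀}(ℝ⁷), where 𝔤₂ = {α ∈ 𝔰𝔬(7) : ∑_{b,c} (Φ₀)_{abc} α_{bc} = 0 for every a} and f_{Φ₀}(ℝ⁷) is the image of the map v ↦ v ⌟ Φ₀; that is, these two subspaces intersect trivially and together span 𝔰𝔬(7). -/
noncomputable section

/-! The contraction `α ↦ (∑_{b,c} (Φ₀)_{abc} α_{bc})_a` inverts `f_{Φ₀}` up to the factor `6`, since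
`∑_{b,c} (Φ₀)_{abc} (Φ₀)_{dbc} = 6 δ_{ad}`. Hence its kernel and the image of `f_{Φ₀}` are complements
in the space of all matrices. As that image lies in `𝔰𝔬(7)`, the modular law turns this into
`𝔰𝔬(7) = (𝔰𝔬(7) ⊓ ker) ⊕ f_{Φ₀}(ℝ⁷)`, and `𝔰𝔬(7) ⊓ ker` is `𝔤₂`. -/

open LinearMap LieAlgebra.Orthogonal

attribute [local instance] LieRing.ofAssociativeRing

theorem LinearMap.isCompl_ker_range_of_comp_eq_smul {K V W : Type*} [Field K] [AddCommGroup V]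
    [Module K V] [AddCommGroup W] [Module K W] (p : W →ₗ[K] V) (f : V →ₗ[K] W) {c : K}
    (hc : c ≠ 0) (h : p ∘ₗ f = c • LinearMap.id) : IsCompl (ker p) (range f) := by
  have hpf (v : V) : p (f v) = c • v := LinearMap.congr_fun h v
  constructor
  · rw [Submodule.disjoint_def]
    rintro _ hx ⟨v, rfl⟩
    have hv : v = 0 := by
      rw [mem_ker, hpf, smul_eq_zero] at hx
      exact hx.resolve_left hc
    rw [hv, map_zero]
  · rw [codisjoint_iff, eq_top_iff]
    intro x _
    have hx : x - f (c⁻¹ • p x) ∈ ker p := by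
      rw [mem_ker, map_sub, hpf, smul_inv_smul₀ hc, sub_self]
    simpa using Submodule.add_mem_sup hx (mem_range_self f (c⁻¹ • p x))

def phi0Contraction : Matrix (Fin 7) (Fin 7) ℝ →ₗ[ℝ] (Fin 7 → ℝ) where
  toFun α a := ∑ b, ∑ c, phi0c a b c * α b c
  map_add' α β := by
    ext a
    simp [mul_add, Finset.sum_add_distrib]
  map_smul' r α := by
    ext a
    simp [Finset.mul_sum, mul_left_comm]

def fmatₗ : (Fin 7 → ℝ) →ₗ[ℝ] Matrix (Fin 7) (Fin 7) ℝ where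
  toFun := fmat
  map_add' u v := by
    ext a b
    simp only [fmat, Matrix.of_apply, Matrix.add_apply, phi0, tri, Pi.add_apply]
    ring
  map_smul' r v := by
    ext a b
    simp only [fmat, Matrix.of_apply, Matrix.smul_apply, phi0, tri, Pi.smul_apply, smul_eq_mul,
      RingHom.id_apply]
    ring

theorem fmat_mem_so (v : Fin 7 → ℝ) : fmat v ∈ so (Fin 7) ℝ := by
  rw [mem_so]
  ext a b
  simp only [Matrix.transpose_apply, Matrix.neg_apply, fmat, Matrix.of_apply, phi0, tri]
  ring

theorem phi0Contraction_fmat (v : Fin 7 → ℝ) : phi0Contraction (fmat v) = (6 : ℝ) • v := by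
  ext a
  change ∑ b, ∑ c, phi0c a b c * fmat v b c = 6 * v a
  fin_cases a <;>
    simp only [phi0c, fmat, Matrix.of_apply, phi0, tri, Fin.sum_univ_seven, Pi.single_apply,
      Fin.reduceFinMk, Fin.zero_eta, Fin.mk_one, Fin.isValue, Fin.reduceEq, ↓reduceIte,
      mul_one, mul_zero, zero_mul, sub_zero, sub_self, add_zero, zero_add] <;>
    ring

/-- `𝔰𝔬(7)` decomposes as the internal direct sum
`𝔰𝔬(7) = 𝔤₂ ⊕ f_{Φ₀}(ℝ⁷)`. -/
theorem stmt9 : ∃ S T U : Submodule ℝ (Matrix (Fin 7) (Fin 7) ℝ),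
    (S : Set (Matrix (Fin 7) (Fin 7) ℝ)) =
      {α | α.transpose = -α ∧ ∀ a, ∑ b, ∑ c, phi0c a b c * α b c = 0} ∧
    (T : Set (Matrix (Fin 7) (Fin 7) ℝ)) = {m | ∃ v : Fin 7 → ℝ, m = fmat v} ∧
    (U : Set (Matrix (Fin 7) (Fin 7) ℝ)) = {α | α.transpose = -α} ∧
    S ⊓ T = ⊥ ∧ S ⊔ T = U := by
  have hcompl : IsCompl (ker phi0Contraction) (range fmatₗ) :=
    isCompl_ker_range_of_comp_eq_smul _ _ (by norm_num) (LinearMap.ext phi0Contraction_fmat)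
  have hrange : range fmatₗ ≤ (so (Fin 7) ℝ).toSubmodule := by
    rintro _ ⟨v, rfl⟩
    exact fmat_mem_so v
  refine ⟨(so (Fin 7) ℝ).toSubmodule ⊓ ker phi0Contraction, range fmatₗ, (so (Fin 7) ℝ).toSubmodule,
    ?_, ?_, ?_, (hcompl.disjoint.mono_left inf_le_right).eq_bot, ?_⟩
  · ext α
    simp [LieSubalgebra.mem_toSubmodule, mem_so, funext_iff, phi0Contraction]
  · ext m
    simp [fmatₗ, eq_comm]
  · ext α
    exact mem_so _ _ α
  · rw [inf_sup_assoc_of_le _ hrange, hcompl.sup_eq_top, inf_top_eq]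

end
end

section
/- Let n be a natural number and suppose there exists a bilinear map × : ℝⁿ × ℝⁿ → ℝⁿ such that for all u, v ∈ ℝⁿ one has ⟨u × v, u⟩ = 0, ⟨u × v, v⟩ = 0, and ‖u × v‖² = ‖u‖²‖v‖² − ⟨u, v⟩². Then n = 0, n = 1, n = 3, or n = 7; in particular, the only dimensions n ≥ 2 admitting such a vector cross product are 3 and 7. -/
noncomputable section

/-- The standard Euclidean inner product on `ℝⁿ`. -/
def ipn {n : ℕ} (u v : Fin n → ℝ) : ℝ := ∑ i, u i * v i


namespace CrossCount
open Matrix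

variable {m p : ℕ} {B : Fin p → Matrix (Fin m) (Fin m) ℝ}

variable (hsk : ∀ i, (B i)ᵀ = -B i) (hsq : ∀ i, B i * B i = -1)
  (hac : ∀ i j, i ≠ j → B i * B j = -(B j * B i))

include hac in
lemma comm_notmem (j : Fin p) :
    ∀ l : List (Fin p), j ∉ l →
      B j * (l.map B).prod = ((-1 : ℝ) ^ l.length) • ((l.map B).prod * B j) := by
  intro l
  induction l with
  | nil => simp
  | cons a t ih =>
    intro hj
    have haj : j ≠ a := fun h => hj (h ▸ (List.mem_cons_self : a ∈ a :: t))
    have hjt : j ∉ t := fun h => hj (List.mem_cons_of_mem a h)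
    simp only [List.map_cons, List.prod_cons, List.length_cons]
    rw [← mul_assoc, hac j a haj, neg_mul, mul_assoc, ih hjt]
    rw [Matrix.mul_smul]
    rw [pow_succ, ← neg_smul, mul_assoc]
    ring_nf

lemma neg_one_pow_mul_self (k : ℕ) : ((-1:ℝ)^k) * ((-1:ℝ)^k) = 1 := by
  rw [← pow_add]; exact Even.neg_one_pow ⟨k, rfl⟩

include hac in
lemma comm_notmem' (j : Fin p) (l : List (Fin p)) (hj : j ∉ l) :
    (l.map B).prod * B j = ((-1 : ℝ) ^ l.length) • (B j * (l.map B).prod) := by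
  rw [comm_notmem hac j l hj, smul_smul, neg_one_pow_mul_self, one_smul]

include hac hsq in
lemma comm_mem (j : Fin p) :
    ∀ l : List (Fin p), l.Nodup → j ∈ l →
      B j * (l.map B).prod = ((-1 : ℝ) ^ (l.length + 1)) • ((l.map B).prod * B j) := by
  intro l
  induction l with
  | nil => simp
  | cons a t ih =>
    intro hnd hj
    have hndt : t.Nodup := (List.nodup_cons.mp hnd).2
    have hat : a ∉ t := (List.nodup_cons.mp hnd).1
    simp only [List.map_cons, List.prod_cons, List.length_cons]
    rcases eq_or_ne j a with rfl | hja
    · have hjt : j ∉ t := hat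
      calc B j * (B j * (List.map B t).prod)
          = (B j * B j) * (List.map B t).prod := by rw [mul_assoc]
        _ = -(List.map B t).prod := by rw [hsq j]; simp
        _ = ((-1:ℝ) ^ (t.length + 1 + 1)) • (B j * (List.map B t).prod * B j) := by
            rw [mul_assoc, comm_notmem' hac j t hjt, Matrix.mul_smul, ← mul_assoc, hsq j,
              smul_smul, ← pow_add]
            have he : ((-1:ℝ)) ^ (t.length + 1 + 1 + t.length) = 1 :=
              Even.neg_one_pow ⟨t.length + 1, by ring⟩
            rw [he, one_smul, neg_one_mul]
    · have hjt : j ∈ t := by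
        rcases List.mem_cons.mp hj with h | h
        · exact absurd h hja
        · exact h
      calc B j * (B a * (List.map B t).prod)
          = (B j * B a) * (List.map B t).prod := by rw [mul_assoc]
        _ = -(B a * (B j * (List.map B t).prod)) := by rw [hac j a hja]; simp [mul_assoc]
        _ = -(B a * (((-1:ℝ) ^ (t.length + 1)) • ((List.map B t).prod * B j))) := by
            rw [ih hndt hjt]
        _ = ((-1:ℝ) ^ (t.length + 1 + 1)) • (B a * (List.map B t).prod * B j) := by
            simp [pow_succ, Matrix.mul_smul, mul_assoc]

/-- Ordered product of the `B i` over a finset. -/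
def P (B : Fin p → Matrix (Fin m) (Fin m) ℝ) (S : Finset (Fin p)) : Matrix (Fin m) (Fin m) ℝ :=
  ((S.sort (· ≤ ·)).map B).prod

include hac hsq in
lemma conj (S : Finset (Fin p)) (j : Fin p) :
    B j * P B S = ((-1 : ℝ) ^ (S.card + if j ∈ S then 1 else 0)) • (P B S * B j) := by
  by_cases hj : j ∈ S
  · rw [if_pos hj]
    have := comm_mem hsq hac j (S.sort (· ≤ ·)) (Finset.sort_nodup _ _)
      ((Finset.mem_sort _).mpr hj)
    rwa [Finset.length_sort] at this
  · rw [if_neg hj]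
    have := comm_notmem hac j (S.sort (· ≤ ·)) (fun h => hj ((Finset.mem_sort _).mp h))
    simpa [Finset.length_sort, P] using this

include hsk hsq in
lemma ortho_list : ∀ l : List (Fin p), ((l.map B).prod)ᵀ * (l.map B).prod = 1 := by
  intro l
  induction l with
  | nil => simp
  | cons a t ih =>
    simp only [List.map_cons, List.prod_cons, Matrix.transpose_mul]
    calc ((List.map B t).prod)ᵀ * (B a)ᵀ * (B a * (List.map B t).prod)
        = ((List.map B t).prod)ᵀ * ((B a)ᵀ * B a) * (List.map B t).prod := by
          rw [mul_assoc, mul_assoc, mul_assoc]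
      _ = 1 := by rw [hsk a, Matrix.neg_mul, hsq a, neg_neg, mul_one, ih]

include hsk hsq in
lemma P_ortho (S : Finset (Fin p)) : (P B S)ᵀ * P B S = 1 := by
  exact ortho_list hsk hsq _

include hsk hsq in
lemma P_trace (S : Finset (Fin p)) : Matrix.trace ((P B S)ᵀ * P B S) = (m : ℝ) := by
  rw [P_ortho hsk hsq]; simp [Matrix.trace_one]

include hsk hsq hac in
lemma trace_orth (S T : Finset (Fin p)) (j : Fin p)
    (hodd : ¬ Even (S.card + T.card + (if j ∈ S then 1 else 0) + (if j ∈ T then 1 else 0))) :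
    Matrix.trace ((P B S)ᵀ * P B T) = 0 := by
  set X := P B S
  set Y := P B T
  set A := B j
  have hAo : Aᵀ * A = 1 := by rw [hsk j, Matrix.neg_mul, hsq j, neg_neg]
  have hAo' : A * Aᵀ = 1 := mul_eq_one_comm.mp hAo
  set e : ℝ := (-1 : ℝ) ^ (S.card + if j ∈ S then 1 else 0)
  set d : ℝ := (-1 : ℝ) ^ (T.card + if j ∈ T then 1 else 0)
  have hX : A * X = e • (X * A) := conj hsq hac S j
  have hY : A * Y = d • (Y * A) := conj hsq hac T j
  have hed : e * d = -1 := by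
    rw [← pow_add]
    refine Odd.neg_one_pow ?_
    rcases Nat.even_or_odd (S.card + (if j ∈ S then 1 else 0) + (T.card + if j ∈ T then 1 else 0)) with he | ho
    · exact absurd (by convert he using 1; ring) hodd
    · exact ho
  have key : Matrix.trace (Xᵀ * Y) = (e * d) * Matrix.trace (Xᵀ * Y) := by
    calc Matrix.trace (Xᵀ * Y) = Matrix.trace (Xᵀ * (Aᵀ * A) * Y) := by rw [hAo, mul_one]
      _ = Matrix.trace ((A * X)ᵀ * (A * Y)) := by
          rw [Matrix.transpose_mul]; simp only [mul_assoc]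
      _ = Matrix.trace ((e • (X * A))ᵀ * (d • (Y * A))) := by rw [hX, hY]
      _ = (e * d) * Matrix.trace ((X * A)ᵀ * (Y * A)) := by
          rw [Matrix.transpose_smul, Matrix.smul_mul, Matrix.mul_smul, smul_smul,
            Matrix.trace_smul, smul_eq_mul]
      _ = (e * d) * Matrix.trace (Xᵀ * Y) := by
          congr 1
          rw [Matrix.transpose_mul, Matrix.trace_mul_comm, mul_assoc, ← mul_assoc A Aᵀ,
            hAo', one_mul, Matrix.trace_mul_comm]
  rw [hed] at key
  linarith [key]

lemma indep {ι : Type*} [Fintype ι] (F : ι → Matrix (Fin m) (Fin m) ℝ)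
    (horth : ∀ i j, i ≠ j → Matrix.trace ((F i)ᵀ * F j) = 0)
    (hself : ∀ i, Matrix.trace ((F i)ᵀ * F i) = (m : ℝ)) (hm : 0 < m) :
    LinearIndependent ℝ F := by
  rw [Fintype.linearIndependent_iff]
  intro g hg i
  have h0 : ∑ j, g j * Matrix.trace ((F i)ᵀ * F j) = 0 := by
    have : Matrix.trace ((F i)ᵀ * ∑ j, g j • F j) = 0 := by rw [hg]; simp
    rw [Matrix.mul_sum] at this
    simp only [Matrix.mul_smul, Matrix.trace_sum, Matrix.trace_smul, smul_eq_mul] at this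
    exact this
  rw [Finset.sum_eq_single i (fun j _ hji => by rw [horth i j (Ne.symm hji), mul_zero])
    (fun hi => absurd (Finset.mem_univ i) hi)] at h0
  rw [hself i] at h0
  have : (m : ℝ) ≠ 0 := Nat.cast_ne_zero.mpr hm.ne'
  exact (mul_eq_zero.mp h0).resolve_right this

/-- Main counting bound: `2^q ≤ m²`. -/
lemma card_bound {q : ℕ} (B : Fin (q + 1) → Matrix (Fin m) (Fin m) ℝ)
    (hsk : ∀ i, (B i)ᵀ = -B i) (hsq : ∀ i, B i * B i = -1)
    (hac : ∀ i j, i ≠ j → B i * B j = -(B j * B i)) (hm : 0 < m) :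
    2 ^ q ≤ m * m := by
  set emb : Fin q ↪ Fin (q + 1) := ⟨Fin.castSucc, Fin.castSucc_injective q⟩
  set F : Finset (Fin q) → Matrix (Fin m) (Fin m) ℝ := fun S => P B (S.map emb) with hF
  have horth : ∀ S T, S ≠ T → Matrix.trace ((F S)ᵀ * F T) = 0 := by
    intro S T hST
    rcases Nat.even_or_odd (S.card + T.card) with hpar | hpar
    · -- pick j₀ in the symmetric difference
      have : ¬ (∀ j, j ∈ S ↔ j ∈ T) := fun hall => hST (Finset.ext hall)
      push_neg at this
      obtain ⟨j₀, hj₀⟩ := this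
      refine trace_orth hsk hsq hac _ _ (emb j₀) ?_
      have hmS : emb j₀ ∈ S.map emb ↔ j₀ ∈ S := by
        constructor
        · intro h; obtain ⟨x, hx, he⟩ := Finset.mem_map.mp h
          rwa [← emb.injective he]
        · intro h; exact Finset.mem_map_of_mem emb h
      have hmT : emb j₀ ∈ T.map emb ↔ j₀ ∈ T := by
        constructor
        · intro h; obtain ⟨x, hx, he⟩ := Finset.mem_map.mp h
          rwa [← emb.injective he]
        · intro h; exact Finset.mem_map_of_mem emb h
      rw [Finset.card_map, Finset.card_map]
      obtain ⟨k, hk⟩ := hpar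
      by_cases h1 : j₀ ∈ S <;> by_cases h2 : j₀ ∈ T
      · tauto
      · simp only [hmS, hmT, if_pos h1, if_neg h2, Nat.even_iff] at *; omega
      · simp only [hmS, hmT, if_neg h1, if_pos h2, Nat.even_iff] at *; omega
      · tauto
    · -- use the last index
      refine trace_orth hsk hsq hac _ _ (Fin.last q) ?_
      have hS : Fin.last q ∉ S.map emb := by
        intro h; obtain ⟨x, hx, he⟩ := Finset.mem_map.mp h
        exact absurd he (Fin.castSucc_lt_last x).ne
      have hT : Fin.last q ∉ T.map emb := by
        intro h; obtain ⟨x, hx, he⟩ := Finset.mem_map.mp h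
        exact absurd he (Fin.castSucc_lt_last x).ne
      rw [if_neg hS, if_neg hT, Finset.card_map, Finset.card_map]
      simpa using hpar
  have hself : ∀ S, Matrix.trace ((F S)ᵀ * F S) = (m : ℝ) := fun S => P_trace hsk hsq _
  have hind := indep F horth hself hm
  have hcard := hind.fintype_card_le_finrank
  simpa [Fintype.card_finset, Fintype.card_fin, Module.finrank_matrix] using hcard

include hsk hac in
lemma transpose_list : ∀ l : List (Fin p), l.Nodup →
    ((l.map B).prod)ᵀ = ((-1 : ℝ) ^ (l.length * (l.length + 1) / 2)) • (l.map B).prod := by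
  intro l
  induction l with
  | nil => simp
  | cons a t ih =>
    intro hnd
    have hndt : t.Nodup := (List.nodup_cons.mp hnd).2
    have hat : a ∉ t := (List.nodup_cons.mp hnd).1
    simp only [List.map_cons, List.prod_cons, List.length_cons, Matrix.transpose_mul]
    rw [ih hndt, hsk a, Matrix.smul_mul, Matrix.mul_neg, smul_neg, ← neg_smul,
      comm_notmem' hac a t hat, smul_smul]
    set k := t.length
    have hexp : (k + 1) * (k + 1 + 1) / 2 = k * (k + 1) / 2 + (k + 1) := by
      obtain ⟨c, hc⟩ := Nat.even_mul_succ_self k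
      have h2 : (k + 1) * (k + 1 + 1) = k * (k + 1) + 2 * (k + 1) := by ring
      omega
    rw [hexp, pow_add]
    congr 1
    rw [pow_succ]
    ring

include hsk hac in
lemma P_transpose (S : Finset (Fin p)) :
    (P B S)ᵀ = ((-1 : ℝ) ^ (S.card * (S.card + 1) / 2)) • P B S := by
  have := transpose_list hsk hac (S.sort (· ≤ ·)) (Finset.sort_nodup _ _)
  rwa [Finset.length_sort] at this

/-- `m = 6` is impossible: the sixteen skew products exceed `dim = 15`. -/
lemma no_six (B : Fin 5 → Matrix (Fin 6) (Fin 6) ℝ)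
    (hsk : ∀ i, (B i)ᵀ = -B i) (hsq : ∀ i, B i * B i = -1)
    (hac : ∀ i j, i ≠ j → B i * B j = -(B j * B i)) : False := by
  classical
  set ι := {S : Finset (Fin 5) // S.card = 1 ∨ S.card = 2 ∨ S.card = 5} with hι
  set F : ι → Matrix (Fin 6) (Fin 6) ℝ := fun S => P B S.1 with hFdef
  have hskewF : ∀ S : ι, (F S)ᵀ = -F S := by
    rintro ⟨S, hS⟩
    rw [hFdef]
    simp only
    rw [P_transpose hsk hac]
    rcases hS with h | h | h <;> rw [h] <;> norm_num
  have horth : ∀ S T : ι, S ≠ T → Matrix.trace ((F S)ᵀ * F T) = 0 := by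
    rintro ⟨S, hS⟩ ⟨T, hT⟩ hST
    have hST' : S ≠ T := fun h => hST (Subtype.ext h)
    rcases Nat.even_or_odd (S.card + T.card) with hpar | hpar
    · have : ¬ (∀ j, j ∈ S ↔ j ∈ T) := fun hall => hST' (Finset.ext hall)
      push_neg at this
      obtain ⟨j₀, hj₀⟩ := this
      refine trace_orth hsk hsq hac _ _ j₀ ?_
      obtain ⟨k, hk⟩ := hpar
      by_cases h1 : j₀ ∈ S <;> by_cases h2 : j₀ ∈ T
      · tauto
      · simp only [if_pos h1, if_neg h2, Nat.even_iff] at *; omega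
      · simp only [if_neg h1, if_pos h2, Nat.even_iff] at *; omega
      · tauto
    · by_cases hcomp : ∃ j, (j ∈ S ↔ j ∈ T)
      · obtain ⟨j, hj⟩ := hcomp
        refine trace_orth hsk hsq hac _ _ j ?_
        obtain ⟨k, hk⟩ := hpar
        by_cases h1 : j ∈ S
        · have h2 := hj.mp h1
          simp only [if_pos h1, if_pos h2, Nat.even_iff] at *; omega
        · have h2 := fun h => h1 (hj.mpr h)
          simp only [if_neg h1, if_neg h2, Nat.even_iff] at *; omega
      · exfalso
        push_neg at hcomp
        have hScomp : ∀ j, j ∈ S ↔ j ∉ T := fun j => by have := hcomp j; tauto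
        have hSc : S = Tᶜ := Finset.ext fun j => by rw [Finset.mem_compl]; exact hScomp j
        have hTle : T.card ≤ 5 := by
          have := Finset.card_le_univ T; simpa using this
        have hcard5 : S.card = 5 - T.card := by
          rw [hSc, Finset.card_compl]; simp
        rcases hS with h | h | h <;> rcases hT with h' | h' | h' <;> omega
  have hself : ∀ S : ι, Matrix.trace ((F S)ᵀ * F S) = (6 : ℝ) := by
    intro S
    have := P_trace hsk hsq (B := B) S.1
    simpa using this
  have hind : LinearIndependent ℝ F := indep F horth hself (by norm_num)
  -- the skew-symmetric matrices
  let f : Matrix (Fin 6) (Fin 6) ℝ →ₗ[ℝ] Matrix (Fin 6) (Fin 6) ℝ :=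
    { toFun := fun X => Xᵀ + X
      map_add' := fun X Y => by simp [Matrix.transpose_add]; abel
      map_smul' := fun c X => by simp [Matrix.transpose_smul, smul_add] }
  have hmemF : ∀ S : ι, F S ∈ LinearMap.ker f := by
    intro S
    rw [LinearMap.mem_ker]
    show (F S)ᵀ + F S = 0
    rw [hskewF S, neg_add_cancel]
  set F' : ι → LinearMap.ker f := fun S => ⟨F S, hmemF S⟩ with hF'
  have hind' : LinearIndependent ℝ F' := by
    apply LinearIndependent.of_comp (LinearMap.ker f).subtype
    convert hind
    rfl
  have hcard : Fintype.card ι ≤ Module.finrank ℝ (LinearMap.ker f) :=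
    hind'.fintype_card_le_finrank
  have hcardι : Fintype.card ι = 16 := by decide
  -- bound the dimension of the skew space by 15
  let g : Matrix (Fin 6) (Fin 6) ℝ →ₗ[ℝ] ({q : Fin 6 × Fin 6 // q.1 < q.2} → ℝ) :=
    { toFun := fun X s => X s.1.1 s.1.2
      map_add' := fun X Y => by ext s; simp
      map_smul' := fun c X => by ext s; simp }
  have hginj : ∀ X ∈ LinearMap.ker f, g X = 0 → X = 0 := by
    intro X hX hgX
    have hskew : Xᵀ = -X := by
      have : Xᵀ + X = 0 := hX
      linear_combination (norm := module) this
    have hup : ∀ a b : Fin 6, a < b → X a b = 0 := fun a b hab =>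
      congrFun hgX ⟨(a, b), hab⟩
    ext a b
    rcases lt_trichotomy a b with hab | hab | hab
    · exact hup a b hab
    · subst hab
      have := congrFun (congrFun hskew a) a
      simp [Matrix.transpose_apply] at this
      simpa using by linarith [this]
    · have := congrFun (congrFun hskew b) a
      simp [Matrix.transpose_apply] at this
      rw [hup b a hab] at this
      simpa using this
  have hrank : Module.finrank ℝ (LinearMap.ker f) ≤ 15 := by
    have hinj : Function.Injective (g.comp (LinearMap.ker f).subtype) := by
      intro X Y hXY
      apply Subtype.ext
      have h1 : g X.1 = g Y.1 := hXY
      have h0 : g (X.1 - Y.1) = 0 := by rw [map_sub, h1, sub_self]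
      exact sub_eq_zero.mp (hginj _ (sub_mem X.2 Y.2) h0)
    have := LinearMap.finrank_le_finrank_of_injective hinj
    calc Module.finrank ℝ (LinearMap.ker f)
        ≤ Module.finrank ℝ ({q : Fin 6 × Fin 6 // q.1 < q.2} → ℝ) := this
      _ = Fintype.card {q : Fin 6 × Fin 6 // q.1 < q.2} := Module.finrank_fintype_fun_eq_card ℝ
      _ = 15 := by decide
  omega

/-- A matrix squaring to `-1` forces even dimension. -/
lemma even_of_sq_neg_one {m : ℕ} (A : Matrix (Fin m) (Fin m) ℝ) (h : A * A = -1) :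
    Even m := by
  by_contra hodd
  have hdet : A.det * A.det = (-1 : ℝ) ^ m := by
    rw [← Matrix.det_mul, h]
    have : (-1 : Matrix (Fin m) (Fin m) ℝ) = (-1 : ℝ) • (1 : Matrix (Fin m) (Fin m) ℝ) := by
      simp
    rw [this, Matrix.det_smul, Matrix.det_one, mul_one, Fintype.card_fin]
  rw [(Nat.not_even_iff_odd.mp hodd).neg_one_pow] at hdet
  nlinarith [sq_nonneg A.det]

lemma pow_gt (k : ℕ) (hk : 8 ≤ k) : (k + 1) * (k + 1) < 2 ^ (k - 1) := by
  obtain ⟨j, rfl⟩ := Nat.exists_eq_add_of_le hk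
  induction j with
  | zero => norm_num
  | succ i ih =>
    have h1 : 8 + (i + 1) - 1 = (8 + i - 1) + 1 := by omega
    rw [h1, pow_succ]
    have := ih (by omega)
    nlinarith

end CrossCount

namespace CrossConstruct
open Matrix

variable {n : ℕ}

lemma ipn_comm (u v : Fin n → ℝ) : ipn u v = ipn v u := by
  simp [ipn, mul_comm]

lemma ipn_add_right (u v w : Fin n → ℝ) : ipn u (v + w) = ipn u v + ipn u w := by
  simp [ipn, mul_add, Finset.sum_add_distrib]

lemma ipn_add_left (u v w : Fin n → ℝ) : ipn (u + v) w = ipn u w + ipn v w := by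
  simp [ipn, add_mul, Finset.sum_add_distrib]

lemma ipn_single_right (u : Fin n → ℝ) (j : Fin n) : ipn u (Pi.single j 1) = u j := by
  simp [ipn, Pi.single_apply]

lemma ipn_single_left (v : Fin n → ℝ) (j : Fin n) : ipn (Pi.single j 1) v = v j := by
  rw [ipn_comm]; exact ipn_single_right v j

lemma ipn_single_single (i j : Fin n) :
    ipn (Pi.single i (1:ℝ)) (Pi.single j 1) = if i = j then 1 else 0 := by
  rw [ipn_single_left, Pi.single_apply]

lemma eq_zero_of_ipn_self (w : Fin n → ℝ) (h : ipn w w = 0) : w = 0 := by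
  have hk : ∀ k, w k ^ 2 = 0 := by
    intro k
    have hnn : ∀ i ∈ Finset.univ, (0:ℝ) ≤ w i * w i := fun i _ => mul_self_nonneg _
    have := (Finset.sum_eq_zero_iff_of_nonneg hnn).mp h k (Finset.mem_univ k)
    nlinarith
  funext k
  simp only [Pi.zero_apply]
  nlinarith [hk k]

lemma basis_expand (x : Fin n → ℝ) : x = ∑ l, x l • (Pi.single l 1 : Fin n → ℝ) := by
  funext k
  rw [Finset.sum_apply]
  simp [Pi.single_apply]

variable (c : (Fin n → ℝ) →ₗ[ℝ] (Fin n → ℝ) →ₗ[ℝ] (Fin n → ℝ))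
  (h1 : ∀ u v, ipn (c u v) u = 0) (h2 : ∀ u v, ipn (c u v) v = 0)
  (h3 : ∀ u v, ipn (c u v) (c u v) = ipn u u * ipn v v - (ipn u v) ^ 2)

include h2 in
lemma d1 (u v w : Fin n → ℝ) : ipn (c u v) w = - ipn (c u w) v := by
  have hvw := h2 u (v + w)
  rw [map_add, ipn_add_left, ipn_add_right, ipn_add_right, h2 u v] at hvw
  have hwv := h2 u w
  linarith [hvw]

include h3 in
lemma d2 (u v w : Fin n → ℝ) :
    ipn (c u v) (c u w) = ipn u u * ipn v w - ipn u v * ipn u w := by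
  have hvw := h3 u (v + w)
  simp only [map_add, ipn_add_left, ipn_add_right] at hvw
  have hv := h3 u v
  have hw := h3 u w
  have hc1 : ipn (c u w) (c u v) = ipn (c u v) (c u w) := ipn_comm _ _
  have hc2 : ipn w v = ipn v w := ipn_comm _ _
  rw [hc1, hc2] at hvw
  linear_combination hvw / 2 - hv / 2 - hw / 2

include h3 in
lemma d4 (u : Fin n → ℝ) : c u u = 0 := by
  apply eq_zero_of_ipn_self
  rw [h3 u u]
  ring

include h2 h3 in
lemma d3 (u v : Fin n → ℝ) :
    c u (c u v) = ipn u v • u - ipn u u • v := by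
  funext k
  have e1 : (c u (c u v)) k = ipn (c u (c u v)) (Pi.single k 1) := (ipn_single_right _ k).symm
  rw [e1, d1 c h2, d2 c h3, ipn_single_left, ipn_single_right]
  simp [ipn_comm u v]
  ring

include c in
lemma dsum1 (u x : Fin n → ℝ) (k : Fin n) :
    ∑ l, x l * (c u (Pi.single l 1)) k = (c u x) k := by
  have : c u x = ∑ l, x l • c u (Pi.single l 1) := by
    conv_lhs => rw [basis_expand x]
    rw [map_sum]
    congr 1
    funext l
    rw [_root_.map_smul]
  rw [this, Finset.sum_apply]
  simp

/-- Left multiplication by the pure vector `u` in the augmented algebra `ℝ × ℝⁿ`. -/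
def Bmat (c : (Fin n → ℝ) →ₗ[ℝ] (Fin n → ℝ) →ₗ[ℝ] (Fin n → ℝ)) (u : Fin n → ℝ) :
    Matrix (Fin (n + 1)) (Fin (n + 1)) ℝ :=
  Matrix.of fun a b =>
    Fin.cases (Fin.cases 0 (fun j => -(u j)) b)
      (fun k => Fin.cases (u k) (fun j => (c u (Pi.single j 1)) k) b) a

@[simp] lemma Bmat_00 (u : Fin n → ℝ) : Bmat c u 0 0 = 0 := rfl

@[simp] lemma Bmat_0s (u : Fin n → ℝ) (j : Fin n) : Bmat c u 0 j.succ = -(u j) := by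
  simp [Bmat]

@[simp] lemma Bmat_s0 (u : Fin n → ℝ) (k : Fin n) : Bmat c u k.succ 0 = u k := by
  simp [Bmat]

@[simp] lemma Bmat_ss (u : Fin n → ℝ) (k j : Fin n) :
    Bmat c u k.succ j.succ = (c u (Pi.single j 1)) k := by
  simp [Bmat]

lemma Bmat_add (u v : Fin n → ℝ) : Bmat c (u + v) = Bmat c u + Bmat c v := by
  ext a b
  induction a using Fin.cases with
  | zero =>
    induction b using Fin.cases with
    | zero => simp
    | succ j => simp [neg_add, add_comm]
  | succ k =>
    induction b using Fin.cases with
    | zero => simp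
    | succ j => simp [map_add]

include h2 in
lemma Bmat_skew (u : Fin n → ℝ) : (Bmat c u)ᵀ = -(Bmat c u) := by
  ext a b
  rw [Matrix.transpose_apply]
  induction a using Fin.cases with
  | zero =>
    induction b using Fin.cases with
    | zero => simp
    | succ j => simp
  | succ k =>
    induction b using Fin.cases with
    | zero => simp
    | succ j =>
      simp only [Bmat_ss, Matrix.neg_apply]
      have := d1 c h2 u (Pi.single j 1) (Pi.single k 1)
      rw [ipn_single_right, ipn_single_right] at this
      linarith [this]

include h1 h2 h3 in
lemma Bmat_sq (u : Fin n → ℝ) :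
    Bmat c u * Bmat c u = (-(ipn u u)) • (1 : Matrix (Fin (n + 1)) (Fin (n + 1)) ℝ) := by
  ext a b
  rw [Matrix.mul_apply, Fin.sum_univ_succ]
  induction a using Fin.cases with
  | zero =>
    induction b using Fin.cases with
    | zero =>
      simp only [Bmat_00, Bmat_0s, Bmat_s0, zero_mul, zero_add, Matrix.smul_apply,
        Matrix.one_apply_eq, smul_eq_mul, mul_one]
      rw [ipn]
      rw [← Finset.sum_neg_distrib]
      congr 1; funext l; ring
    | succ j =>
      have hz := h1 u (Pi.single j 1)
      rw [ipn] at hz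
      simp only [Bmat_00, Bmat_0s, Bmat_ss, zero_mul, zero_add, Matrix.smul_apply,
        smul_eq_mul]
      rw [Matrix.one_apply_ne (Ne.symm (Fin.succ_ne_zero j)), mul_zero]
      calc ∑ l, -(u l) * (c u (Pi.single j 1)) l
          = -∑ l, (c u (Pi.single j 1)) l * u l := by
            rw [← Finset.sum_neg_distrib]; congr 1; funext l; ring
        _ = 0 := by rw [hz, neg_zero]
  | succ k =>
    induction b using Fin.cases with
    | zero =>
      have hz : (c u u) k = 0 := by rw [d4 c h3 u]; rfl
      rw [← dsum1 c u u k] at hz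
      simp only [Bmat_s0, Bmat_00, Bmat_ss, mul_zero, zero_add, Matrix.smul_apply,
        smul_eq_mul]
      rw [Matrix.one_apply_ne (Fin.succ_ne_zero k), mul_zero]
      rw [← hz]
      congr 1; funext l; ring
    | succ j =>
      have hd3 : (c u (c u (Pi.single j 1))) k
          = u j * u k - ipn u u * (Pi.single j 1 : Fin n → ℝ) k := by
        rw [d3 c h2 h3 u (Pi.single j 1)]
        simp [ipn_single_right]
      rw [← dsum1 c u (c u (Pi.single j 1)) k] at hd3
      simp only [Bmat_s0, Bmat_0s, Bmat_ss, Matrix.smul_apply, smul_eq_mul]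
      have hsum : ∑ l, (c u (Pi.single l 1)) k * (c u (Pi.single j 1)) l
          = u j * u k - ipn u u * (Pi.single j 1 : Fin n → ℝ) k := by
        rw [← hd3]
        congr 1; funext l; ring
      rw [hsum, Matrix.one_apply, Pi.single_apply]
      by_cases hkj : k = j
      · subst hkj
        simp
        ring
      · rw [if_neg (by simpa [Fin.succ_inj] using hkj), if_neg (by simpa [eq_comm] using hkj)]
        ring

end CrossConstruct

open Matrix in
/-- if `ℝⁿ` admits a bilinear vector cross product, then
`n ∈ {0, 1, 3, 7}`. -/
theorem stmt11 (n : ℕ)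
    (h : ∃ c : (Fin n → ℝ) →ₗ[ℝ] (Fin n → ℝ) →ₗ[ℝ] (Fin n → ℝ),
      ∀ u v, ipn (c u v) u = 0 ∧ ipn (c u v) v = 0 ∧
        ipn (c u v) (c u v) = ipn u u * ipn v v - (ipn u v) ^ 2) :
    n = 0 ∨ n = 1 ∨ n = 3 ∨ n = 7 := by
  classical
  obtain ⟨c, hc⟩ := h
  have h1 : ∀ u v, ipn (c u v) u = 0 := fun u v => (hc u v).1
  have h2 : ∀ u v, ipn (c u v) v = 0 := fun u v => (hc u v).2.1
  have h3 : ∀ u v, ipn (c u v) (c u v) = ipn u u * ipn v v - (ipn u v) ^ 2 :=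
    fun u v => (hc u v).2.2
  set Bi : Fin n → Matrix (Fin (n + 1)) (Fin (n + 1)) ℝ :=
    fun i => CrossConstruct.Bmat c (Pi.single i 1) with hBi
  have hsk : ∀ i, (Bi i)ᵀ = -(Bi i) := fun i => CrossConstruct.Bmat_skew c h2 _
  have hone : ∀ i : Fin n, ipn (Pi.single i (1:ℝ)) (Pi.single i 1) = 1 := by
    intro i; rw [CrossConstruct.ipn_single_single]; simp
  have hsq : ∀ i, Bi i * Bi i = -1 := by
    intro i
    rw [hBi]
    simp only
    rw [CrossConstruct.Bmat_sq c h1 h2 h3, hone i]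
    simp
  have hac : ∀ i j, i ≠ j → Bi i * Bi j = -(Bi j * Bi i) := by
    intro i j hij
    have hip : ipn (Pi.single i (1:ℝ) + Pi.single j 1) (Pi.single i 1 + Pi.single j 1)
        = 2 := by
      rw [CrossConstruct.ipn_add_left, CrossConstruct.ipn_add_right,
        CrossConstruct.ipn_add_right, hone i, hone j,
        CrossConstruct.ipn_single_single, CrossConstruct.ipn_single_single,
        if_neg hij, if_neg (Ne.symm hij)]
      norm_num
    have hsum : (Bi i + Bi j) * (Bi i + Bi j)
        = (-(2:ℝ)) • (1 : Matrix (Fin (n+1)) (Fin (n+1)) ℝ) := by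
      show (CrossConstruct.Bmat c (Pi.single i 1) + CrossConstruct.Bmat c (Pi.single j 1))
        * (CrossConstruct.Bmat c (Pi.single i 1) + CrossConstruct.Bmat c (Pi.single j 1)) = _
      rw [← CrossConstruct.Bmat_add, CrossConstruct.Bmat_sq c h1 h2 h3, hip]
    rw [add_mul, mul_add, mul_add, hsq i, hsq j] at hsum
    have h2s : ((-(2:ℝ)) • (1 : Matrix (Fin (n+1)) (Fin (n+1)) ℝ)) = -1 + -1 := by
      rw [neg_smul, two_smul, neg_add]
    rw [h2s] at hsum
    have h0 : Bi i * Bi j + Bi j * Bi i = 0 := by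
      calc Bi i * Bi j + Bi j * Bi i
          = (-1 + Bi i * Bi j) + (Bi j * Bi i + -1) + 1 + 1 := by abel
        _ = ((-1 : Matrix (Fin (n+1)) (Fin (n+1)) ℝ) + -1) + 1 + 1 := by rw [hsum]
        _ = 0 := by abel
    exact eq_neg_of_add_eq_zero_left h0
  by_contra hcon
  push_neg at hcon
  obtain ⟨hn0, hn1, hn3, hn7⟩ := hcon
  rcases le_or_gt n 7 with hle | hgt
  · interval_cases n
    · exact hn0 rfl
    · exact hn1 rfl
    · -- n = 2
      have := CrossCount.even_of_sq_neg_one (Bi 0) (hsq 0)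
      rw [Nat.even_iff] at this; omega
    · exact hn3 rfl
    · have := CrossCount.even_of_sq_neg_one (Bi 0) (hsq 0)
      rw [Nat.even_iff] at this; omega
    · -- n = 5
      exact CrossCount.no_six Bi hsk hsq hac
    · have := CrossCount.even_of_sq_neg_one (Bi 0) (hsq 0)
      rw [Nat.even_iff] at this; omega
    · exact hn7 rfl
  · obtain ⟨q, rfl⟩ : ∃ q, n = q + 1 := ⟨n - 1, by omega⟩
    have hbd := CrossCount.card_bound Bi hsk hsq hac (by omega)
    have hgt2 := CrossCount.pow_gt (q + 1) (by omega)
    simp only [Nat.add_sub_cancel] at hgt2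
    omega

end
end

section
/- Each of the three ℝ-linear involutions α, β, γ of ℝ⁷ = ℝ³ ⊕ ℂ², given by α(x₁,x₂,x₃,z₁,z₂) = (x₁,x₂,x₃,−z₁,−z₂), β(x₁,x₂,x₃,z₁,z₂) = (x₁,−x₂,−x₃, i z₂, −i z₁), and γ(x₁,x₂,x₃,z₁,z₂) = (−x₁,x₂,−x₃, z̄₁, z̄₂), preserves the flat G₂ three-form: Φ₀(σu, σv, σw) = Φ₀(u, v, w) for σ ∈ {α, β, γ} and all u, v, w ∈ ℝ⁷. -/
noncomputable section

/-- The involution `α(x₁,x₂,x₃,z₁,z₂) = (x₁,x₂,x₃,−z₁,−z₂)` of `ℝ⁷ = ℝ³ ⊕ ℂ²`,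
where `z₁ = x₄ + i x₅`, `z₂ = x₆ + i x₇` (0-based coordinates). -/
def mapA (u : Fin 7 → ℝ) : Fin 7 → ℝ :=
  ![u 0, u 1, u 2, -u 3, -u 4, -u 5, -u 6]

/-- The involution `β(x₁,x₂,x₃,z₁,z₂) = (x₁,−x₂,−x₃, i z₂, −i z₁)`. -/
def mapB (u : Fin 7 → ℝ) : Fin 7 → ℝ :=
  ![u 0, -u 1, -u 2, -u 6, u 5, u 4, -u 3]

/-- The involution `γ(x₁,x₂,x₃,z₁,z₂) = (−x₁,x₂,−x₃, conj z₁, conj z₂)`. -/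
def mapC (u : Fin 7 → ℝ) : Fin 7 → ℝ :=
  ![-u 0, u 1, -u 2, u 3, -u 4, u 5, -u 6]

/-! Each of `α`, `β`, `γ` is a signed permutation of the coordinates, so it carries each monomial
`dxᵢⱼₖ` of `Φ₀` to `± dx_{π i, π j, π k}`. For `α` and `γ` the permutation is trivial and every
monomial of `Φ₀` picks up an even number of sign changes; `β` swaps `dx₁₄₅ ↔ dx₁₆₇` and
`dx₂₄₆ ↔ −dx₂₅₇`, with signs matching the coefficients of `Φ₀`. -/

def signedReindex {ι R : Type*} [Mul R] (s : ι → R) (π : ι → ι) (u : ι → R) : ι → R :=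
  fun a => s a * u (π a)

lemma tri_signedReindex (s : Fin 7 → ℝ) (π : Fin 7 → Fin 7) (i j k : Fin 7)
    (u v w : Fin 7 → ℝ) :
    tri i j k (signedReindex s π u) (signedReindex s π v) (signedReindex s π w) =
      s i * s j * s k * tri (π i) (π j) (π k) u v w := by
  simp only [tri, signedReindex]
  ring

lemma tri_swap_right (i j k : Fin 7) (u v w : Fin 7 → ℝ) :
    tri i k j u v w = -tri i j k u v w := by
  simp only [tri]
  ring

lemma mapA_eq_signedReindex (u : Fin 7 → ℝ) :
    mapA u = signedReindex ![1, 1, 1, -1, -1, -1, -1] id u := by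
  ext a
  fin_cases a <;> simp [mapA, signedReindex]

lemma mapB_eq_signedReindex (u : Fin 7 → ℝ) :
    mapB u = signedReindex ![1, -1, -1, -1, 1, 1, -1] ![0, 1, 2, 6, 5, 4, 3] u := by
  ext a
  fin_cases a <;> simp [mapB, signedReindex]

lemma mapC_eq_signedReindex (u : Fin 7 → ℝ) :
    mapC u = signedReindex ![-1, 1, -1, 1, -1, 1, -1] id u := by
  ext a
  fin_cases a <;> simp [mapC, signedReindex]

lemma phi0_mapA (u v w : Fin 7 → ℝ) : phi0 (mapA u) (mapA v) (mapA w) = phi0 u v w := by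
  simp only [mapA_eq_signedReindex, phi0, tri_signedReindex, Matrix.cons_val, id]
  norm_num

lemma phi0_mapB (u v w : Fin 7 → ℝ) : phi0 (mapB u) (mapB v) (mapB w) = phi0 u v w := by
  simp only [mapB_eq_signedReindex, phi0, tri_signedReindex, Matrix.cons_val]
  norm_num
  rw [tri_swap_right 0 5 6, tri_swap_right 0 3 4, tri_swap_right 1 4 6, tri_swap_right 1 3 5,
    tri_swap_right 2 3 6, tri_swap_right 2 4 5]
  ring

lemma phi0_mapC (u v w : Fin 7 → ℝ) : phi0 (mapC u) (mapC v) (mapC w) = phi0 u v w := by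
  simp only [mapC_eq_signedReindex, phi0, tri_signedReindex, Matrix.cons_val, id]
  norm_num

/-- each of the involutions `α`, `β`, `γ` preserves the flat `G₂`
three-form `Φ₀`. -/
theorem stmt14 : ∀ u v w : Fin 7 → ℝ,
    phi0 (mapA u) (mapA v) (mapA w) = phi0 u v w ∧
    phi0 (mapB u) (mapB v) (mapB w) = phi0 u v w ∧
    phi0 (mapC u) (mapC v) (mapC w) = phi0 u v w :=
  fun u v w => ⟨phi0_mapA u v w, phi0_mapB u v w, phi0_mapC u v w⟩
end
end

section
/- The subspace 𝔤₂ = {α ∈ 𝔰𝔬(7) : ∑_{b,c} (Φ₀)_{abc} α_{bc} = 0 for every index a} is closed under the matrix commutator: if α, β ∈ 𝔤₂ then αβ − βα ∈ 𝔤₂; hence 𝔤₂ is a Lie subalgebra of the 7×7 real matrices. -/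
noncomputable section

/-!
For a skew matrix `α`, each component `(α · Φ₀)(eᵢ, eⱼ, eₖ)` of the infinitesimal action of `α`
on `Φ₀` is `±½` times one of the seven contractions `∑_{b,c} (Φ₀)_{abc} α_{bc}`, and each
contraction occurs. Hence `𝔤₂` is exactly the stabilizer of `Φ₀` in `𝔰𝔬(7)`, and the stabilizer
of any trilinear form is closed under commutators.
-/

open scoped Matrix

namespace LinearMap

variable {R M N : Type*} [CommRing R] [AddCommGroup M] [Module R M] [AddCommGroup N] [Module R N]

def trilinearDeriv (T : M →ₗ[R] M →ₗ[R] M →ₗ[R] N) (A : Module.End R M) (u v w : M) : N :=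
  T (A u) v w + T u (A v) w + T u v (A w)

def trilinearStabilizer (T : M →ₗ[R] M →ₗ[R] M →ₗ[R] N) : Set (Module.End R M) :=
  {A | ∀ u v w, T.trilinearDeriv A u v w = 0}

theorem trilinearDeriv_mul_sub_mul (T : M →ₗ[R] M →ₗ[R] M →ₗ[R] N) (A B : Module.End R M)
    (u v w : M) :
    T.trilinearDeriv (A * B - B * A) u v w =
      T.trilinearDeriv A (B u) v w + T.trilinearDeriv A u (B v) w + T.trilinearDeriv A u v (B w)
        - (T.trilinearDeriv B (A u) v w + T.trilinearDeriv B u (A v) w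
          + T.trilinearDeriv B u v (A w)) := by
  simp only [trilinearDeriv, sub_apply, Module.End.mul_apply, map_sub]
  abel

theorem mul_sub_mul_mem_trilinearStabilizer {T : M →ₗ[R] M →ₗ[R] M →ₗ[R] N}
    {A B : Module.End R M} (hA : A ∈ T.trilinearStabilizer) (hB : B ∈ T.trilinearStabilizer) :
    A * B - B * A ∈ T.trilinearStabilizer := fun u v w => by
  simp [trilinearDeriv_mul_sub_mul, hA _ _ _, hB _ _ _]

end LinearMap

def phi0Form : (Fin 7 → ℝ) →ₗ[ℝ] (Fin 7 → ℝ) →ₗ[ℝ] (Fin 7 → ℝ) →ₗ[ℝ] ℝ :=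
  LinearMap.mk₂ ℝ (fun u v => ⟨⟨phi0 u v, fun w w' => by simp only [phi0, tri, Pi.add_apply]; ring⟩,
      fun c w => by simp only [phi0, tri, Pi.smul_apply, smul_eq_mul, RingHom.id_apply]; ring⟩)
    (fun u u' v => LinearMap.ext fun w => by
      simp only [LinearMap.coe_mk, AddHom.coe_mk, LinearMap.add_apply, phi0, tri, Pi.add_apply]; ring)
    (fun c u v => LinearMap.ext fun w => by
      simp only [LinearMap.coe_mk, AddHom.coe_mk, LinearMap.smul_apply, phi0, tri, Pi.smul_apply,
        smul_eq_mul]; ring)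
    (fun u v v' => LinearMap.ext fun w => by
      simp only [LinearMap.coe_mk, AddHom.coe_mk, LinearMap.add_apply, phi0, tri, Pi.add_apply]; ring)
    (fun c u v => LinearMap.ext fun w => by
      simp only [LinearMap.coe_mk, AddHom.coe_mk, LinearMap.smul_apply, phi0, tri, Pi.smul_apply,
        smul_eq_mul]; ring)

theorem phi0Form_apply (u v w : Fin 7 → ℝ) : phi0Form u v w = phi0 u v w := rfl

theorem Matrix.apply_swap_eq_neg_of_transpose_eq_neg {n R : Type*} [Neg R]
    {A : Matrix n n R} (h : Aᵀ = -A) (i j : n) : A j i = -A i j :=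
  congrFun (congrFun h i) j

section Skew

variable {α : Matrix (Fin 7) (Fin 7) ℝ}

theorem sum_phi0c_mul_eq_of_transpose_eq_neg (hskew : αᵀ = -α) (a : Fin 7) :
    ∑ b, ∑ c, phi0c a b c * α b c =
      2 * ![α 1 2 + α 3 4 + α 5 6, -α 0 2 + α 3 5 - α 4 6, α 0 1 - α 3 6 - α 4 5,
        -α 0 4 - α 1 5 + α 2 6, α 0 3 + α 1 6 + α 2 5, -α 0 6 + α 1 3 - α 2 4,
        α 0 5 - α 1 4 - α 2 3] a := by
  -- the premise `i < j` orients the rewrite, so that `simp` moves every entry above the diagonal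
  have hlow (i j : Fin 7) (_ : i < j) : α j i = -α i j :=
    Matrix.apply_swap_eq_neg_of_transpose_eq_neg hskew i j
  fin_cases a <;>
    simp (disch := decide) [Fin.sum_univ_seven, phi0c, phi0, tri, Pi.single_apply, hlow] <;> ring

theorem sum_phi0c_mul_eq_zero_iff (hskew : αᵀ = -α) :
    (∀ a, ∑ b, ∑ c, phi0c a b c * α b c = 0) ↔
      α 1 2 + α 3 4 + α 5 6 = 0 ∧ -α 0 2 + α 3 5 - α 4 6 = 0 ∧ α 0 1 - α 3 6 - α 4 5 = 0 ∧
        -α 0 4 - α 1 5 + α 2 6 = 0 ∧ α 0 3 + α 1 6 + α 2 5 = 0 ∧ -α 0 6 + α 1 3 - α 2 4 = 0 ∧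
          α 0 5 - α 1 4 - α 2 3 = 0 := by
  simp [sum_phi0c_mul_eq_of_transpose_eq_neg hskew, Fin.forall_fin_succ]

theorem toLinAlgEquiv'_mem_trilinearStabilizer_phi0Form (hskew : αᵀ = -α)
    (hc : ∀ a, ∑ b, ∑ c, phi0c a b c * α b c = 0) :
    Matrix.toLinAlgEquiv' α ∈ phi0Form.trilinearStabilizer := by
  have hswap := Matrix.apply_swap_eq_neg_of_transpose_eq_neg hskew
  have hlow (i j : Fin 7) (_ : i < j) : α j i = -α i j := hswap i j
  have hdiag (i : Fin 7) : α i i = 0 := by linarith [hswap i i]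
  obtain ⟨h0, h1, h2, h3, h4, h5, h6⟩ := (sum_phi0c_mul_eq_zero_iff hskew).1 hc
  have e0 : α 5 6 = -α 1 2 - α 3 4 := by linarith
  have e1 : α 4 6 = -α 0 2 + α 3 5 := by linarith
  have e2 : α 4 5 = α 0 1 - α 3 6 := by linarith
  have e3 : α 2 6 = α 0 4 + α 1 5 := by linarith
  have e4 : α 2 5 = -α 0 3 - α 1 6 := by linarith
  have e5 : α 2 4 = -α 0 6 + α 1 3 := by linarith
  have e6 : α 2 3 = α 0 5 - α 1 4 := by linarith
  intro u v w
  simp (disch := decide) only [LinearMap.trilinearDeriv, phi0Form_apply,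
    Matrix.toLinAlgEquiv'_apply, Matrix.mulVec, dotProduct, Fin.sum_univ_seven, phi0, tri, hdiag,
    hlow]
  simp only [e0, e1, e2, e3, e4, e5, e6]
  ring

theorem sum_phi0c_mul_eq_zero_of_mem_trilinearStabilizer (hskew : αᵀ = -α)
    (hα : Matrix.toLinAlgEquiv' α ∈ phi0Form.trilinearStabilizer) :
    ∀ a, ∑ b, ∑ c, phi0c a b c * α b c = 0 := by
  have hlow (i j : Fin 7) (_ : i < j) : α j i = -α i j :=
    Matrix.apply_swap_eq_neg_of_transpose_eq_neg hskew i j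
  have h0 := hα (Pi.single 1 1) (Pi.single 3 1) (Pi.single 6 1)
  have h1 := hα (Pi.single 0 1) (Pi.single 3 1) (Pi.single 6 1)
  have h2 := hα (Pi.single 0 1) (Pi.single 3 1) (Pi.single 5 1)
  have h3 := hα (Pi.single 0 1) (Pi.single 1 1) (Pi.single 6 1)
  have h4 := hα (Pi.single 0 1) (Pi.single 1 1) (Pi.single 5 1)
  have h5 := hα (Pi.single 0 1) (Pi.single 1 1) (Pi.single 4 1)
  have h6 := hα (Pi.single 0 1) (Pi.single 1 1) (Pi.single 3 1)
  simp (disch := decide) [LinearMap.trilinearDeriv, phi0Form_apply, phi0, tri, hlow]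
    at h0 h1 h2 h3 h4 h5 h6
  rw [sum_phi0c_mul_eq_zero_iff hskew]
  refine ⟨?_, ?_, ?_, ?_, ?_, ?_, ?_⟩ <;> linarith

end Skew

/-- `𝔤₂` is closed under the matrix commutator, hence is a Lie
subalgebra of the 7×7 real matrices. -/
theorem stmt18 (α β : Matrix (Fin 7) (Fin 7) ℝ)
    (hα : α.transpose = -α ∧ ∀ a, ∑ b, ∑ c, phi0c a b c * α b c = 0)
    (hβ : β.transpose = -β ∧ ∀ a, ∑ b, ∑ c, phi0c a b c * β b c = 0) :
    (α * β - β * α).transpose = -(α * β - β * α) ∧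
      ∀ a, ∑ b, ∑ c, phi0c a b c * (α * β - β * α) b c = 0 := by
  have hskew : (α * β - β * α)ᵀ = -(α * β - β * α) := by
    rw [Matrix.transpose_sub, Matrix.transpose_mul, Matrix.transpose_mul, hα.1, hβ.1]
    noncomm_ring
  refine ⟨hskew, sum_phi0c_mul_eq_zero_of_mem_trilinearStabilizer hskew ?_⟩
  rw [map_sub, map_mul, map_mul]
  exact LinearMap.mul_sub_mul_mem_trilinearStabilizer
    (toLinAlgEquiv'_mem_trilinearStabilizer_phi0Form hα.1 hα.2)
    (toLinAlgEquiv'_mem_trilinearStabilizer_phi0Form hβ.1 hβ.2)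
end
end
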